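/- arXiv:1508.02946 — 3 statements merged into one kernel-verified Lean document; each statement's English description precedes it below -/
import Mathlib

section
/- Let F be a finite metric space with at least two points. Then min{ν_F(a) : a ∈ F} = δ(F) and max{ν_F(a) : a ∈ F} = ∇(F). -/
/-! Every point `a` has a nearest neighbour `b`, so the pairs `{a, b}` form a 2-covering whose
diameter is `max ν_F`; conversely any 2-covering puts each `a` in a member together with some
other point, whose diameter is therefore at least `ν_F(a)`. The minimum of `ν_F` is the
separation because `ν_F(y) ≤ d(x, y)` for a pair `x, y` realising it. -/

open Metric

namespace FinDim

variable {X : Type*} [MetricSpace X]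

/-- `ν_F(a)`: the distance from `a` to a nearest other point of `F`. -/
noncomputable def nu (F : Finset X) (a : X) : ℝ :=
  sInf {r : ℝ | ∃ x ∈ F, x ≠ a ∧ r = dist a x}

/-- `δ(F)`: the separation of `F`, the minimum distance between distinct points. -/
noncomputable def sep (F : Finset X) : ℝ :=
  sInf {r : ℝ | ∃ x ∈ F, ∃ y ∈ F, x ≠ y ∧ r = dist x y}

/-- A 2-covering of `F`: a family of subsets of `F` covering `F`,
each member having at least two elements. -/
def IsTwoCover (F : Finset X) (U : Finset (Finset X)) : Prop :=
  (∀ V ∈ U, V ⊆ F) ∧ (∀ V ∈ U, 2 ≤ V.card) ∧ ∀ a ∈ F, ∃ V ∈ U, a ∈ V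

/-- `Δ(𝒰)`: maximum diameter of the members of the family `𝒰`. -/
noncomputable def coverDiam (U : Finset (Finset X)) : ℝ :=
  sSup {r : ℝ | ∃ V ∈ U, r = Metric.diam (V : Set X)}

/-- `∇(F)`: the covering diameter of `F`. -/
noncomputable def nablaF (F : Finset X) : ℝ :=
  sInf {r : ℝ | ∃ U : Finset (Finset X), IsTwoCover F U ∧ r = coverDiam U}

/-- `a` is a focal point of `F`. -/
def IsFocal (F : Finset X) (a : X) : Prop :=
  a ∈ F ∧ ∀ x ∈ F, x ≠ a → dist a x = Metric.diam (F : Set X)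

/-- `H^s_𝒰(F) = Σ_{U ∈ 𝒰} Δ(U)^s`. -/
noncomputable def Hcov (U : Finset (Finset X)) (s : ℝ) : ℝ :=
  ∑ V ∈ U, Metric.diam (V : Set X) ^ s

/-- `H^s(F)`: minimum of `H^s_𝒰(F)` over 2-coverings `𝒰` with `Δ(𝒰) = ∇(F)`. -/
noncomputable def HH (F : Finset X) (s : ℝ) : ℝ :=
  sInf {h : ℝ | ∃ U : Finset (Finset X),
    IsTwoCover F U ∧ coverDiam U = nablaF F ∧ h = Hcov U s}

/-- The finite Hausdorff dimension: the unique `s₀ ∈ (0,∞)` with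
`H^{s₀}(F) = Δ(F)^{s₀}` (when `F` has no focal points). -/
noncomputable def dimfH (F : Finset X) : ℝ :=
  sInf {s : ℝ | 0 < s ∧ HH F s = Metric.diam (F : Set X) ^ s}

/-- `T_{∇(F)}(F)`: the minimal cardinality of a 2-covering `𝒰` with `Δ(𝒰) = ∇(F)`. -/
noncomputable def Tmin (F : Finset X) : ℕ :=
  sInf {n : ℕ | ∃ U : Finset (Finset X),
    IsTwoCover F U ∧ coverDiam U = nablaF F ∧ U.card = n}

/-- The finite box dimension `dim_fB(F) = ln T_{∇(F)}(F) / ln (Δ(F)/∇(F))`. -/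
noncomputable def dimfB (F : Finset X) : ℝ :=
  Real.log (Tmin F) / Real.log (Metric.diam (F : Set X) / nablaF F)

/-- `ν_A(x)` for a subset `A` of a metric space. -/
noncomputable def nuSet {Z : Type*} [MetricSpace Z] (A : Set Z) (x : Z) : ℝ :=
  sInf {r : ℝ | ∃ y ∈ A, y ≠ x ∧ r = dist x y}

/-- `∇(A) = sup {ν_A(x) : x ∈ A}` for a subset `A` of a metric space. -/
noncomputable def nablaSet {Z : Type*} [MetricSpace Z] (A : Set Z) : ℝ :=
  sSup {r : ℝ | ∃ x ∈ A, r = nuSet A x}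

end FinDim

namespace FinDim

open Classical

variable {X : Type*} [MetricSpace X] {F : Finset X} {a x y : X}

lemma nu_eq_inf' (h : (F.erase a).Nonempty) : nu F a = (F.erase a).inf' h (dist a) := by
  rw [Finset.inf'_eq_csInf_image, nu]
  congr 1
  ext r
  simp [eq_comm, and_assoc]

lemma nu_le_dist (hx : x ∈ F) (hxa : x ≠ a) : nu F a ≤ dist a x := by
  have hmem : x ∈ F.erase a := Finset.mem_erase.2 ⟨hxa, hx⟩
  rw [nu_eq_inf' ⟨x, hmem⟩]
  exact Finset.inf'_le _ hmem

lemma exists_dist_eq_nu (hF : 2 ≤ F.card) (a : X) : ∃ x ∈ F, x ≠ a ∧ dist a x = nu F a := by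
  obtain ⟨x, hx, hxa⟩ := F.exists_mem_ne hF a
  have h : (F.erase a).Nonempty := ⟨x, Finset.mem_erase.2 ⟨hxa, hx⟩⟩
  obtain ⟨y, hy, hya⟩ := (F.erase a).exists_mem_eq_inf' h (dist a)
  rw [nu_eq_inf' h]
  exact ⟨y, Finset.mem_of_mem_erase hy, Finset.ne_of_mem_erase hy, hya.symm⟩

lemma sep_eq_infsep (h : F.offDiag.Nonempty) : sep F = (F : Set X).infsep := by
  rw [Finset.coe_infsep_of_offDiag_nonempty h, Finset.inf'_eq_csInf_image, sep]
  congr 1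
  ext r
  simp [eq_comm, and_assoc]

lemma isLeast_nu_sep (hF : 2 ≤ F.card) : IsLeast {r : ℝ | ∃ a ∈ F, r = nu F a} (sep F) := by
  have hnt : (F : Set X).Nontrivial := Finset.one_lt_card_iff_nontrivial.1 hF
  have hoff : F.offDiag.Nonempty := by
    rw [← Finset.coe_nonempty, Finset.coe_offDiag]
    exact Set.offDiag_nonempty.2 hnt
  rw [sep_eq_infsep hoff]
  constructor
  · obtain ⟨x, hx, y, hy, hxy, hd⟩ := hnt.infsep_exists_of_finite
    obtain ⟨z, hz, hzy, hdz⟩ := exists_dist_eq_nu hF y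
    refine ⟨y, hy, le_antisymm ?_ ?_⟩
    · rw [← hdz]
      exact Set.infsep_le_dist_of_mem hy hz hzy.symm
    · rw [hd, dist_comm]
      exact nu_le_dist hx hxy
  · rintro _ ⟨a, ha, rfl⟩
    obtain ⟨x, hx, hxa, hd⟩ := exists_dist_eq_nu hF a
    rw [← hd]
    exact Set.infsep_le_dist_of_mem ha hx hxa.symm

lemma coverDiam_eq_sup' {U : Finset (Finset X)} (h : U.Nonempty) :
    coverDiam U = U.sup' h (fun V => diam (V : Set X)) := by
  rw [Finset.sup'_eq_csSup_image, coverDiam]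
  congr 1
  ext r
  simp [eq_comm]

lemma diam_le_coverDiam {U : Finset (Finset X)} {V : Finset X} (hV : V ∈ U) :
    diam (V : Set X) ≤ coverDiam U := by
  rw [coverDiam_eq_sup' ⟨V, hV⟩]
  exact Finset.le_sup' (fun V : Finset X => diam (V : Set X)) hV

lemma nu_le_coverDiam {U : Finset (Finset X)} (hU : IsTwoCover F U) (ha : a ∈ F) :
    nu F a ≤ coverDiam U := by
  obtain ⟨hsub, hcard, hcov⟩ := hU
  obtain ⟨V, hV, haV⟩ := hcov a ha
  obtain ⟨x, hxV, hxa⟩ := V.exists_mem_ne (hcard V hV) a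
  calc nu F a ≤ dist a x := nu_le_dist (hsub V hV hxV) hxa
    _ ≤ diam (V : Set X) := dist_le_diam_of_mem V.finite_toSet.isBounded haV hxV
    _ ≤ coverDiam U := diam_le_coverDiam hV

noncomputable def nearestPairs (F : Finset X) : Finset (Finset X) :=
  (F.offDiag.filter fun p => dist p.1 p.2 = nu F p.1).image fun p => {p.1, p.2}

lemma mem_nearestPairs {V : Finset X} :
    V ∈ nearestPairs F ↔ ∃ a ∈ F, ∃ b ∈ F, a ≠ b ∧ dist a b = nu F a ∧ {a, b} = V := by
  simp [nearestPairs, and_assoc]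

lemma isTwoCover_nearestPairs (hF : 2 ≤ F.card) : IsTwoCover F (nearestPairs F) := by
  refine ⟨?_, ?_, ?_⟩
  · intro V hV
    obtain ⟨a, ha, b, hb, -, -, rfl⟩ := mem_nearestPairs.1 hV
    exact Finset.insert_subset ha (Finset.singleton_subset_iff.2 hb)
  · intro V hV
    obtain ⟨a, -, b, -, hab, -, rfl⟩ := mem_nearestPairs.1 hV
    exact (Finset.card_pair hab).ge
  · intro a ha
    obtain ⟨b, hb, hba, hd⟩ := exists_dist_eq_nu hF a
    exact ⟨{a, b}, mem_nearestPairs.2 ⟨a, ha, b, hb, hba.symm, hd, rfl⟩,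
      Finset.mem_insert_self a _⟩

lemma coverDiam_nearestPairs_le (hF : 2 ≤ F.card) {c : ℝ} (hc : ∀ a ∈ F, nu F a ≤ c) :
    coverDiam (nearestPairs F) ≤ c := by
  obtain ⟨a, ha⟩ := Finset.card_pos.1 (by omega : 0 < F.card)
  obtain ⟨V, hV, -⟩ := (isTwoCover_nearestPairs hF).2.2 a ha
  rw [coverDiam_eq_sup' ⟨V, hV⟩]
  refine Finset.sup'_le _ _ fun W hW => ?_
  obtain ⟨a, ha, b, -, -, hd, rfl⟩ := mem_nearestPairs.1 hW
  rw [Finset.coe_pair, diam_pair, hd]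
  exact hc a ha

lemma nablaF_eq_nu (hF : 2 ≤ F.card) (ha : a ∈ F) (hmax : ∀ x ∈ F, nu F x ≤ nu F a) :
    nablaF F = nu F a := by
  have hcover := isTwoCover_nearestPairs hF
  refine IsLeast.csInf_eq ⟨⟨nearestPairs F, hcover, ?_⟩, ?_⟩
  · exact le_antisymm (nu_le_coverDiam hcover ha) (coverDiam_nearestPairs_le hF hmax)
  · rintro _ ⟨U, hU, rfl⟩
    exact nu_le_coverDiam hU ha

lemma isGreatest_nu_nablaF (hF : 2 ≤ F.card) :
    IsGreatest {r : ℝ | ∃ a ∈ F, r = nu F a} (nablaF F) := by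
  obtain ⟨a, ha, hmax⟩ := F.exists_max_image (nu F) (Finset.card_pos.1 (by omega))
  rw [nablaF_eq_nu hF ha hmax]
  exact ⟨⟨a, ha, rfl⟩, by rintro _ ⟨x, hx, rfl⟩; exact hmax x hx⟩

end FinDim

open FinDim in
/-- min{ν_F(a) : a ∈ F} = δ(F) and max{ν_F(a) : a ∈ F} = ∇(F). -/
theorem stmt0 {X : Type*} [MetricSpace X] (F : Finset X) (hF : 2 ≤ F.card) :
    IsLeast {r : ℝ | ∃ a ∈ F, r = nu F a} (sep F) ∧
    IsGreatest {r : ℝ | ∃ a ∈ F, r = nu F a} (nablaF F) :=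
  ⟨isLeast_nu_sep hF, isGreatest_nu_nablaF hF⟩
end

section
/- Let η : (X,d) → (X',d') be an (r,β)-Hölder equivalence and let F ⊆ X be a finite subset with at least two points and no focal points. Then η(F) has no focal points and, for every s ∈ [0,∞), H^s(η(F)) = r^s · H^{sβ}(F). -/
open Metric

/-!
An `(r,β)`-Hölder equivalence `η` transforms every distance, hence every diameter, by the
strictly increasing map `t ↦ r t^β` of `[0,∞)`. Since `η` is injective, `𝒰 ↦ {η(U) : U ∈ 𝒰}`
is a bijection between the 2-coverings of `F` and those of `η(F)`; it transforms covering
diameters by `t ↦ r t^β`, so it matches the coverings realising `∇(F)` with those realising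
`∇(η(F))`, and `H^s` of the image of `𝒰` is `r^s H^{sβ}_𝒰`. Focal points are preserved
for the same reason.
-/

open Metric Set Bornology FinDim

lemma strictMonoOn_mul_rpow {r β : ℝ} (hr : 0 < r) (hβ : 0 < β) :
    StrictMonoOn (fun t : ℝ => r * t ^ β) (Ici 0) :=
  fun _ hx _ _ hxy => mul_lt_mul_of_pos_left (Real.rpow_lt_rpow hx hxy hβ) hr

-- `f 0 = 0` takes care of `s = ∅`, where `sSup ∅ = 0`.
lemma Real.sSup_image_of_finite {f : ℝ → ℝ} {s : Set ℝ} (hs : s.Finite) (hf : MonotoneOn f s)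
    (hf0 : f 0 = 0) : sSup (f '' s) = f (sSup s) := by
  rcases s.eq_empty_or_nonempty with rfl | hne
  · simp [hf0]
  · exact (hf.map_isGreatest ⟨hne.csSup_mem hs, fun _ hx => le_csSup hs.bddAbove hx⟩).csSup_eq

lemma Real.sInf_image_of_finite {f : ℝ → ℝ} {s : Set ℝ} (hs : s.Finite) (hf : MonotoneOn f s)
    (hf0 : f 0 = 0) : sInf (f '' s) = f (sInf s) := by
  rcases s.eq_empty_or_nonempty with rfl | hne
  · simp [hf0]
  · exact (hf.map_isLeast ⟨hne.csInf_mem hs, fun _ hx => csInf_le hs.bddBelow hx⟩).csInf_eq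

structure IsHolderEquivalence {X X' : Type*} [MetricSpace X] [MetricSpace X'] (η : X → X')
    (r β : ℝ) : Prop where
  ratio_pos : 0 < r
  exponent_pos : 0 < β
  dist_eq : ∀ x y, dist (η x) (η y) = r * dist x y ^ β

namespace FinDim

variable {X : Type*} [MetricSpace X]

lemma coverDiam_nonneg (U : Finset (Finset X)) : 0 ≤ coverDiam U :=
  Real.sSup_nonneg <| by rintro _ ⟨V, -, rfl⟩; exact diam_nonneg

lemma nablaF_nonneg (F : Finset X) : 0 ≤ nablaF F :=
  Real.sInf_nonneg <| by rintro _ ⟨U, -, rfl⟩; exact coverDiam_nonneg U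

lemma finite_setOf_diam (U : Finset (Finset X)) :
    {d : ℝ | ∃ V ∈ U, d = diam (V : Set X)}.Finite :=
  (U.finite_toSet.image fun V : Finset X => diam (V : Set X)).subset <| by
    rintro _ ⟨V, hV, rfl⟩
    exact ⟨V, hV, rfl⟩

lemma finite_setOf_coverDiam (F : Finset X) :
    {d : ℝ | ∃ U, IsTwoCover F U ∧ d = coverDiam U}.Finite :=
  (F.powerset.powerset.finite_toSet.image coverDiam).subset <| by
    rintro _ ⟨U, hU, rfl⟩
    exact ⟨U, Finset.mem_powerset.2 fun V hV => Finset.mem_powerset.2 (hU.1 V hV), rfl⟩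

end FinDim

namespace FinDim.IsTwoCover

variable {X X' : Type*} [DecidableEq X'] {f : X → X'} {F : Finset X}

lemma image (hf : f.Injective) {U : Finset (Finset X)} (hU : IsTwoCover F U) :
    IsTwoCover (F.image f) (U.image (·.image f)) := by
  obtain ⟨hsub, hcard, hcover⟩ := hU
  refine ⟨?_, ?_, ?_⟩
  · simp only [Finset.forall_mem_image]
    exact fun V hV => Finset.image_subset_image (hsub V hV)
  · simp only [Finset.forall_mem_image, Finset.card_image_of_injective _ hf]
    exact hcard
  · simp only [Finset.forall_mem_image, Finset.exists_mem_image, hf.mem_finset_image]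
    exact hcover

lemma exists_image_eq (hf : f.Injective) {U' : Finset (Finset X')}
    (hU' : IsTwoCover (F.image f) U') :
    ∃ U, IsTwoCover F U ∧ U.image (·.image f) = U' := by
  classical
  obtain ⟨hsub, hcard, hcover⟩ := hU'
  set preimage : Finset X' → Finset X := fun V' => F.filter (f · ∈ V')
  have image_preimage : ∀ V' ∈ U', (preimage V').image f = V' := by
    intro V' hV'
    ext y
    simp only [preimage, Finset.mem_image, Finset.mem_filter]
    constructor
    · rintro ⟨x, ⟨-, hx⟩, rfl⟩
      exact hx
    · intro hy
      obtain ⟨x, hx, rfl⟩ := Finset.mem_image.1 (hsub V' hV' hy)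
      exact ⟨x, ⟨hx, hy⟩, rfl⟩
  refine ⟨U'.image preimage, ⟨?_, ?_, ?_⟩, ?_⟩
  · simp only [Finset.forall_mem_image]
    exact fun V' _ => Finset.filter_subset _ _
  · simp only [Finset.forall_mem_image]
    intro V' hV'
    have := hcard V' hV'
    rwa [← image_preimage V' hV', Finset.card_image_of_injective _ hf] at this
  · intro a ha
    obtain ⟨V', hV', haV'⟩ := hcover (f a) (Finset.mem_image_of_mem f ha)
    exact ⟨preimage V', Finset.mem_image_of_mem _ hV', Finset.mem_filter.2 ⟨ha, haV'⟩⟩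
  · rw [Finset.image_image]
    exact (Finset.image_congr fun V' hV' => image_preimage V' hV').trans Finset.image_id

end FinDim.IsTwoCover

namespace IsHolderEquivalence

variable {X X' : Type*} [MetricSpace X] [MetricSpace X'] {η : X → X'} {r β : ℝ}
  (h : IsHolderEquivalence η r β)
include h

lemma strictMonoOn : StrictMonoOn (fun t : ℝ => r * t ^ β) (Ici 0) :=
  strictMonoOn_mul_rpow h.ratio_pos h.exponent_pos

lemma injective : η.Injective := fun x y hxy => by
  have := h.dist_eq x y
  rw [hxy, dist_self, eq_comm, mul_eq_zero, Real.rpow_eq_zero dist_nonneg h.exponent_pos.ne']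
    at this
  exact dist_eq_zero.1 (this.resolve_left h.ratio_pos.ne')

lemma diam_image {s : Set X} (hs : IsBounded s) : diam (η '' s) = r * diam s ^ β := by
  have dist_le : ∀ x ∈ s, ∀ y ∈ s, dist (η x) (η y) ≤ r * diam s ^ β := fun x hx y hy => by
    rw [h.dist_eq]
    exact h.strictMonoOn.monotoneOn dist_nonneg diam_nonneg (dist_le_diam_of_mem hs hx hy)
  have hbdd : IsBounded (η '' s) :=
    isBounded_iff.2 ⟨_, by simpa only [forall_mem_image] using dist_le⟩
  refine le_antisymm (diam_le_of_forall_dist_le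
    (mul_nonneg h.ratio_pos.le (Real.rpow_nonneg diam_nonneg β))
    (by simpa only [forall_mem_image] using dist_le)) ?_
  have hq : 0 ≤ diam (η '' s) / r := div_nonneg diam_nonneg h.ratio_pos.le
  have hdiam : diam s ≤ (diam (η '' s) / r) ^ β⁻¹ :=
    diam_le_of_forall_dist_le (Real.rpow_nonneg hq _) fun x hx y hy => by
      rw [Real.le_rpow_inv_iff_of_pos dist_nonneg hq h.exponent_pos, le_div_iff₀' h.ratio_pos,
        ← h.dist_eq]
      exact dist_le_diam_of_mem hbdd (mem_image_of_mem η hx) (mem_image_of_mem η hy)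
  rwa [Real.le_rpow_inv_iff_of_pos diam_nonneg hq h.exponent_pos, le_div_iff₀' h.ratio_pos]
    at hdiam

variable [DecidableEq X']

lemma isFocal_of_isFocal_image {F : Finset X} {a : X}
    (ha : IsFocal (F.image η) (η a)) : IsFocal F a := by
  refine ⟨h.injective.mem_finset_image.1 ha.1, fun x hx hxa => ?_⟩
  have hdist := ha.2 (η x) (Finset.mem_image_of_mem η hx) (h.injective.ne hxa)
  rw [h.dist_eq, Finset.coe_image, h.diam_image F.finite_toSet.isBounded] at hdist
  exact h.strictMonoOn.injOn dist_nonneg diam_nonneg hdist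

lemma coverDiam_image (U : Finset (Finset X)) :
    coverDiam (U.image (·.image η)) = r * coverDiam U ^ β := by
  have hset : {d : ℝ | ∃ V' ∈ U.image (·.image η), d = diam ((V' : Finset X') : Set X')}
      = (fun t => r * t ^ β) '' {d : ℝ | ∃ V ∈ U, d = diam (V : Set X)} := by
    ext d
    simp only [Finset.exists_mem_image, Finset.coe_image,
      h.diam_image (Finset.finite_toSet _).isBounded, mem_image, mem_ofPred_eq]
    constructor
    · rintro ⟨V, hV, rfl⟩
      exact ⟨_, ⟨V, hV, rfl⟩, rfl⟩
    · rintro ⟨_, ⟨V, hV, rfl⟩, rfl⟩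
      exact ⟨V, hV, rfl⟩
  rw [coverDiam, coverDiam, hset, Real.sSup_image_of_finite (FinDim.finite_setOf_diam U)
    (h.strictMonoOn.monotoneOn.mono (by rintro _ ⟨V, -, rfl⟩; exact diam_nonneg))
    (by simp [h.exponent_pos.ne'])]

lemma nablaF_image (F : Finset X) : nablaF (F.image η) = r * nablaF F ^ β := by
  have hset : {d : ℝ | ∃ U', IsTwoCover (F.image η) U' ∧ d = coverDiam U'}
      = (fun t => r * t ^ β) '' {d : ℝ | ∃ U, IsTwoCover F U ∧ d = coverDiam U} := by
    ext d
    constructor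
    · rintro ⟨U', hU', rfl⟩
      obtain ⟨U, hU, rfl⟩ := hU'.exists_image_eq h.injective
      exact ⟨_, ⟨U, hU, rfl⟩, (h.coverDiam_image U).symm⟩
    · rintro ⟨_, ⟨U, hU, rfl⟩, rfl⟩
      exact ⟨_, hU.image h.injective, (h.coverDiam_image U).symm⟩
  rw [nablaF, nablaF, hset, Real.sInf_image_of_finite (FinDim.finite_setOf_coverDiam F)
    (h.strictMonoOn.monotoneOn.mono (by rintro _ ⟨U, -, rfl⟩; exact coverDiam_nonneg U))
    (by simp [h.exponent_pos.ne'])]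

lemma Hcov_image (U : Finset (Finset X)) (s : ℝ) :
    Hcov (U.image (·.image η)) s = r ^ s * Hcov U (s * β) := by
  rw [Hcov, Hcov, Finset.sum_image fun V _ W _ hVW => Finset.image_injective h.injective hVW,
    Finset.mul_sum]
  refine Finset.sum_congr rfl fun V _ => ?_
  rw [Finset.coe_image, h.diam_image (Finset.finite_toSet _).isBounded,
    Real.mul_rpow h.ratio_pos.le (by positivity), ← Real.rpow_mul diam_nonneg, mul_comm β s]

lemma HH_image (F : Finset X) (s : ℝ) : HH (F.image η) s = r ^ s * HH F (s * β) := by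
  have hset : {t : ℝ | ∃ U', IsTwoCover (F.image η) U' ∧ coverDiam U' = nablaF (F.image η) ∧
        t = Hcov U' s}
      = (r ^ s * ·) '' {t : ℝ | ∃ U, IsTwoCover F U ∧ coverDiam U = nablaF F ∧
        t = Hcov U (s * β)} := by
    ext t
    constructor
    · rintro ⟨U', hU', hdiam, rfl⟩
      obtain ⟨U, hU, rfl⟩ := hU'.exists_image_eq h.injective
      rw [h.coverDiam_image, h.nablaF_image] at hdiam
      exact ⟨_, ⟨U, hU, h.strictMonoOn.injOn (coverDiam_nonneg U) (nablaF_nonneg F) hdiam, rfl⟩,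
        (h.Hcov_image U s).symm⟩
    · rintro ⟨_, ⟨U, hU, hdiam, rfl⟩, rfl⟩
      exact ⟨_, hU.image h.injective, by rw [h.coverDiam_image, h.nablaF_image, hdiam],
        (h.Hcov_image U s).symm⟩
  rw [HH, HH, hset]
  exact Real.sInf_smul_of_nonneg (Real.rpow_nonneg h.ratio_pos.le s) _

end IsHolderEquivalence

open FinDim in
theorem stmt2_general {X X' : Type*} [MetricSpace X] [MetricSpace X'] [DecidableEq X'] (η : X → X') (r β : ℝ)
    (hr : 0 < r) (hβ : 0 < β)
    (hη : ∀ x y : X, dist (η x) (η y) = r * dist x y ^ β)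
    (F : Finset X) (hfoc : ∀ a, ¬ IsFocal F a) :
    (∀ a, ¬ IsFocal (F.image η) a) ∧
    ∀ s : ℝ, 0 ≤ s → HH (F.image η) s = r ^ s * HH F (s * β) := by
  have holder : IsHolderEquivalence η r β := ⟨hr, hβ, hη⟩
  refine ⟨fun a' ha' => ?_, fun s _ => holder.HH_image F s⟩
  obtain ⟨a, -, rfl⟩ := Finset.mem_image.1 ha'.1
  exact hfoc a (holder.isFocal_of_isFocal_image ha')

open FinDim in
/-- Behaviour of `H^s` under an `(r,β)`-Hölder equivalence. -/
theorem stmt2 {X X' : Type*} [MetricSpace X] [MetricSpace X'] [DecidableEq X'] (η : X → X') (r β : ℝ)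
    (hr : 0 < r) (hβ : 0 < β)
    (hη : ∀ x y : X, dist (η x) (η y) = r * dist x y ^ β)
    (F : Finset X) (hF : 2 ≤ F.card) (hfoc : ∀ a, ¬ IsFocal F a) :
    (∀ a, ¬ IsFocal (F.image η) a) ∧
    ∀ s : ℝ, 0 ≤ s → HH (F.image η) s = r ^ s * HH F (s * β) :=
  stmt2_general η r β hr hβ hη F hfoc
end

section
/- For every real number t ∈ (0,∞) there exists a finite subset F_t of the Euclidean plane ℝ², with at least two points and no focal points, such that dim_fH(F_t) = t = dim_fB(F_t). -/
open Metric

/-! ### Auxiliary machinery -/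

open FinDim in
/-- Abstract key lemma: if `F` is covered by exactly two "forced" pairs of diameter 1,
all distances are at least 1, and the diameter is `Δ > 1`, then both dimensions equal
`log 2 / log Δ`. -/
theorem FinDim.key_two_pairs {X : Type*} [MetricSpace X] (F A B : Finset X) (Δ : ℝ)
    (hΔF : Metric.diam (F : Set X) = Δ) (hΔ1 : 1 < Δ)
    (hAF : A ⊆ F) (hBF : B ⊆ F) (hA2 : A.card = 2) (hB2 : B.card = 2)
    (hdA : Metric.diam (A : Set X) = 1) (hdB : Metric.diam (B : Set X) = 1)
    (hcov : ∀ x ∈ F, x ∈ A ∨ x ∈ B)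
    (hsmall : ∀ V : Finset X, V ⊆ F → 2 ≤ V.card → Metric.diam (V : Set X) ≤ 1 → V = A ∨ V = B)
    (hab : ∃ x, x ∈ A ∧ x ∉ B) (hba : ∃ x, x ∈ B ∧ x ∉ A)
    (hmin : ∀ x ∈ F, ∀ y ∈ F, x ≠ y → 1 ≤ dist x y) :
    2 ≤ F.card ∧ (∀ a, ¬ IsFocal F a) ∧
      dimfH F = Real.log 2 / Real.log Δ ∧ dimfB F = Real.log 2 / Real.log Δ := by
  haveI := Classical.decEq X
  obtain ⟨xa, hxaA, hxaB⟩ := hab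
  obtain ⟨xb, hxbB, hxbA⟩ := hba
  have hAB : A ≠ B := fun h => hxaB (h ▸ hxaA)
  -- the canonical cover
  have htc₀ : IsTwoCover F ({A, B} : Finset (Finset X)) := by
    refine ⟨?_, ?_, ?_⟩
    · intro V hV
      rcases Finset.mem_insert.1 hV with rfl | hV
      · exact hAF
      · exact (Finset.mem_singleton.1 hV) ▸ hBF
    · intro V hV
      rcases Finset.mem_insert.1 hV with rfl | hV
      · omega
      · rw [Finset.mem_singleton.1 hV]; omega
    · intro a ha
      rcases hcov a ha with h | h
      · exact ⟨A, by simp, h⟩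
      · exact ⟨B, by simp, h⟩
  have hcd0 : coverDiam ({A, B} : Finset (Finset X)) = 1 := by
    have hset : {r : ℝ | ∃ V ∈ ({A, B} : Finset (Finset X)), r = Metric.diam (V : Set X)}
        = {1} := by
      ext r
      simp only [Finset.mem_insert, Finset.mem_singleton, Set.mem_setOf_eq,
        Set.mem_singleton_iff]
      constructor
      · rintro ⟨V, (rfl | rfl), rfl⟩ <;> simp [hdA, hdB]
      · rintro rfl; exact ⟨A, Or.inl rfl, hdA.symm⟩
    rw [coverDiam, hset, csSup_singleton]
  -- diameters of members are bounded by coverDiam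
  have hSfin : ∀ U : Finset (Finset X),
      ({r : ℝ | ∃ V ∈ U, r = Metric.diam (V : Set X)}).Finite := by
    intro U
    have hsub : {r : ℝ | ∃ V ∈ U, r = Metric.diam (V : Set X)} ⊆
        ↑(U.image (fun V : Finset X => Metric.diam (V : Set X))) := by
      rintro r ⟨V, hV, rfl⟩
      simp only [Finset.coe_image, Set.mem_image, Finset.mem_coe]
      exact ⟨V, hV, rfl⟩
    exact ((U.image _).finite_toSet).subset hsub
  have hmemle : ∀ (U : Finset (Finset X)), ∀ V ∈ U,
      Metric.diam (V : Set X) ≤ coverDiam U := by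
    intro U V hV
    exact le_csSup (hSfin U).bddAbove ⟨V, hV, rfl⟩
  have hge1 : ∀ U : Finset (Finset X), IsTwoCover F U → 1 ≤ coverDiam U := by
    intro U hU
    have hxaF : xa ∈ F := hAF hxaA
    obtain ⟨V, hV, hxV⟩ := hU.2.2 xa hxaF
    obtain ⟨y, hyV, hy⟩ :=
      Finset.exists_mem_ne (s := V) (by have := hU.2.1 V hV; omega) xa
    have h1 : 1 ≤ dist xa y := hmin xa hxaF y (hU.1 V hV hyV) (Ne.symm hy)
    have h2 : dist xa y ≤ Metric.diam (V : Set X) :=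
      Metric.dist_le_diam_of_mem V.finite_toSet.isBounded hxV hyV
    exact le_trans h1 (le_trans h2 (hmemle U V hV))
  have hnabla : nablaF F = 1 := by
    apply le_antisymm
    · exact csInf_le ⟨1, by rintro r ⟨U, hU, rfl⟩; exact hge1 U hU⟩
        ⟨{A, B}, htc₀, hcd0.symm⟩
    · exact le_csInf ⟨1, {A, B}, htc₀, hcd0.symm⟩
        (by rintro r ⟨U, hU, rfl⟩; exact hge1 U hU)
  have huniq : ∀ U : Finset (Finset X), IsTwoCover F U → coverDiam U = 1 →
      U = ({A, B} : Finset (Finset X)) := by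
    intro U hU hcd
    have hmem : ∀ V ∈ U, V = A ∨ V = B := by
      intro V hV
      exact hsmall V (hU.1 V hV) (hU.2.1 V hV) (hcd ▸ hmemle U V hV)
    have hAU : A ∈ U := by
      obtain ⟨V, hV, hxaV⟩ := hU.2.2 xa (hAF hxaA)
      rcases hmem V hV with rfl | rfl
      · exact hV
      · exact absurd hxaV hxaB
    have hBU : B ∈ U := by
      obtain ⟨V, hV, hxbV⟩ := hU.2.2 xb (hBF hxbB)
      rcases hmem V hV with rfl | rfl
      · exact absurd hxbV hxbA
      · exact hV
    apply Finset.Subset.antisymm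
    · intro V hV
      rcases hmem V hV with rfl | rfl <;> simp
    · intro V hV
      rcases Finset.mem_insert.1 hV with rfl | hV
      · exact hAU
      · exact (Finset.mem_singleton.1 hV) ▸ hBU
  have hHcov : ∀ s : ℝ, Hcov ({A, B} : Finset (Finset X)) s = 2 := by
    intro s
    rw [Hcov, Finset.sum_pair hAB, hdA, hdB, Real.one_rpow]
    norm_num
  have hHH : ∀ s : ℝ, HH F s = 2 := by
    intro s
    have hset : {h : ℝ | ∃ U : Finset (Finset X),
        IsTwoCover F U ∧ coverDiam U = nablaF F ∧ h = Hcov U s} = {2} := by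
      ext h
      simp only [Set.mem_setOf_eq, Set.mem_singleton_iff]
      constructor
      · rintro ⟨U, hU, hcd, rfl⟩
        rw [huniq U hU (hnabla ▸ hcd)]
        exact hHcov s
      · rintro rfl
        exact ⟨{A, B}, htc₀, by rw [hcd0, hnabla], (hHcov s).symm⟩
    rw [HH, hset, csInf_singleton]
  have hΔ0 : (0:ℝ) < Δ := lt_trans one_pos hΔ1
  have hlogΔ : 0 < Real.log Δ := Real.log_pos hΔ1
  set t₀ := Real.log 2 / Real.log Δ with ht₀
  have ht₀pos : 0 < t₀ := div_pos (Real.log_pos one_lt_two) hlogΔ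
  have hΔt₀ : Δ ^ t₀ = 2 := by
    rw [Real.rpow_def_of_pos hΔ0, ht₀]
    field_simp
    exact Real.exp_log two_pos
  refine ⟨?_, ?_, ?_, ?_⟩
  · calc 2 = A.card := hA2.symm
      _ ≤ F.card := Finset.card_le_card hAF
  · rintro a ⟨haF, hfoc⟩
    obtain ⟨y, hyAB, hya, hyd⟩ : ∃ y, y ∈ F ∧ y ≠ a ∧ dist a y ≤ 1 := by
      rcases hcov a haF with h | h
      · obtain ⟨y, hyA, hy⟩ := Finset.exists_mem_ne (s := A) (by omega) a
        exact ⟨y, hAF hyA, hy, hdA ▸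
          Metric.dist_le_diam_of_mem A.finite_toSet.isBounded h hyA⟩
      · obtain ⟨y, hyB, hy⟩ := Finset.exists_mem_ne (s := B) (by omega) a
        exact ⟨y, hBF hyB, hy, hdB ▸
          Metric.dist_le_diam_of_mem B.finite_toSet.isBounded h hyB⟩
    have := hfoc y hyAB hya
    rw [hΔF] at this
    linarith
  · rw [dimfH]
    have hset : {s : ℝ | 0 < s ∧ HH F s = Metric.diam (F : Set X) ^ s} = {t₀} := by
      ext s
      simp only [Set.mem_setOf_eq, Set.mem_singleton_iff, hHH, hΔF]
      constructor
      · rintro ⟨hs, h2⟩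
        have hlog : Real.log 2 = s * Real.log Δ := by
          rw [h2, Real.log_rpow hΔ0]
        rw [ht₀, hlog]
        field_simp
      · rintro rfl
        exact ⟨ht₀pos, hΔt₀.symm⟩
    rw [hset, csInf_singleton]
  · have hT : Tmin F = 2 := by
      have hset : {n : ℕ | ∃ U : Finset (Finset X),
          IsTwoCover F U ∧ coverDiam U = nablaF F ∧ U.card = n} = {2} := by
        ext n
        simp only [Set.mem_setOf_eq, Set.mem_singleton_iff]
        constructor
        · rintro ⟨U, hU, hcd, rfl⟩
          rw [huniq U hU (hnabla ▸ hcd)]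
          exact Finset.card_pair hAB
        · rintro rfl
          exact ⟨{A, B}, htc₀, by rw [hcd0, hnabla], Finset.card_pair hAB⟩
      rw [Tmin, hset, csInf_singleton]
    rw [dimfB, hT, hnabla, hΔF, div_one]
    norm_num
    exact ht₀.symm

/-- A point of the Euclidean plane. -/
noncomputable def FinDim.pt (x y : ℝ) : EuclideanSpace ℝ (Fin 2) := !₂[x, y]

open FinDim in
theorem FinDim.dist_pt (x1 y1 x2 y2 : ℝ) :
    dist (pt x1 y1) (pt x2 y2) = Real.sqrt ((x1 - x2) ^ 2 + (y1 - y2) ^ 2) := by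
  rw [EuclideanSpace.dist_eq]
  simp [pt, Fin.sum_univ_two, Real.dist_eq, sq_abs]

set_option maxHeartbeats 1000000 in
open FinDim in
/-- The triangle construction, for `1 < Δ ≤ 2`. -/
theorem FinDim.tri_case (Δ : ℝ) (h1 : 1 < Δ) (h2 : Δ ≤ 2) :
    ∃ F : Finset (EuclideanSpace ℝ (Fin 2)), 2 ≤ F.card ∧ (∀ a, ¬ IsFocal F a) ∧
      dimfH F = Real.log 2 / Real.log Δ ∧ dimfB F = Real.log 2 / Real.log Δ := by
  haveI := Classical.decEq (EuclideanSpace ℝ (Fin 2))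
  have hΔ0 : (0:ℝ) < Δ := by linarith
  obtain ⟨x, hxdef⟩ : ∃ x : ℝ, x = 1 - Δ ^ 2 / 2 := ⟨_, rfl⟩
  have hxub : x ≤ 1 / 2 := by rw [hxdef]; nlinarith
  have hxlb : -1 ≤ x := by rw [hxdef]; nlinarith
  have hx2' : 0 ≤ 1 - x ^ 2 := by
    nlinarith [mul_nonneg (by linarith : (0:ℝ) ≤ 1 - x) (by linarith : (0:ℝ) ≤ 1 + x)]
  obtain ⟨y, hydef⟩ : ∃ y : ℝ, y = Real.sqrt (1 - x ^ 2) := ⟨_, rfl⟩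
  have hy2 : y ^ 2 = 1 - x ^ 2 := by rw [hydef]; exact Real.sq_sqrt hx2'
  set a := pt 0 0 with ha
  set b := pt 1 0 with hb
  set c := pt x y with hc
  have dab : dist a b = 1 := by rw [ha, hb, dist_pt]; norm_num
  have dac : dist a c = 1 := by
    rw [ha, hc, dist_pt]
    have : (0 - x) ^ 2 + (0 - y) ^ 2 = 1 := by linear_combination hy2
    rw [this, Real.sqrt_one]
  have dbc : dist b c = Δ := by
    rw [hb, hc, dist_pt]
    have : (1 - x) ^ 2 + (0 - y) ^ 2 = Δ ^ 2 := by linear_combination hy2 - 2 * hxdef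
    rw [this, Real.sqrt_sq (le_of_lt hΔ0)]
  have hne_ab : a ≠ b := dist_ne_zero.mp (by rw [dab]; norm_num)
  have hne_ac : a ≠ c := dist_ne_zero.mp (by rw [dac]; norm_num)
  have hne_bc : b ≠ c := dist_ne_zero.mp (by rw [dbc]; linarith)
  set F : Finset (EuclideanSpace ℝ (Fin 2)) := {a, b, c} with hF
  have hFset : (F : Set (EuclideanSpace ℝ (Fin 2))) = {a, b, c} := by simp [hF]
  have hdF : Metric.diam (F : Set (EuclideanSpace ℝ (Fin 2))) = Δ := by
    rw [hFset, Metric.diam_triple, dab, dac, dbc]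
    rw [max_self]
    exact max_eq_right (le_of_lt h1)
  have hdA : Metric.diam (({a, b} : Finset (EuclideanSpace ℝ (Fin 2))) :
      Set (EuclideanSpace ℝ (Fin 2))) = 1 := by
    rw [Finset.coe_insert, Finset.coe_singleton, Metric.diam_pair, dab]
  have hdB : Metric.diam (({a, c} : Finset (EuclideanSpace ℝ (Fin 2))) :
      Set (EuclideanSpace ℝ (Fin 2))) = 1 := by
    rw [Finset.coe_insert, Finset.coe_singleton, Metric.diam_pair, dac]
  have hcardA : ({a, b} : Finset (EuclideanSpace ℝ (Fin 2))).card = 2 :=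
    Finset.card_pair hne_ab
  have hcardB : ({a, c} : Finset (EuclideanSpace ℝ (Fin 2))).card = 2 :=
    Finset.card_pair hne_ac
  have hsmall : ∀ V : Finset (EuclideanSpace ℝ (Fin 2)), V ⊆ F → 2 ≤ V.card →
      Metric.diam (V : Set (EuclideanSpace ℝ (Fin 2))) ≤ 1 →
      V = ({a, b} : Finset _) ∨ V = ({a, c} : Finset _) := by
    intro V hVF hV2 hVd
    have hnot : ¬ (b ∈ V ∧ c ∈ V) := by
      rintro ⟨hbV, hcV⟩
      have := Metric.dist_le_diam_of_mem V.finite_toSet.isBounded hbV hcV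
      rw [dbc] at this; linarith
    by_cases hbV : b ∈ V
    · left
      have hsub : V ⊆ {a, b} := by
        intro v hv
        have := hVF hv
        simp only [hF, Finset.mem_insert, Finset.mem_singleton] at this ⊢
        rcases this with rfl | rfl | rfl
        · exact Or.inl rfl
        · exact Or.inr rfl
        · exact absurd ⟨hbV, hv⟩ hnot
      exact Finset.eq_of_subset_of_card_le hsub (by rw [hcardA]; exact hV2)
    · right
      have hsub : V ⊆ {a, c} := by
        intro v hv
        have := hVF hv
        simp only [hF, Finset.mem_insert, Finset.mem_singleton] at this ⊢
        rcases this with rfl | rfl | rfl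
        · exact Or.inl rfl
        · exact absurd hv hbV
        · exact Or.inr rfl
      exact Finset.eq_of_subset_of_card_le hsub (by rw [hcardB]; exact hV2)
  have hmin : ∀ p ∈ F, ∀ q ∈ F, p ≠ q → 1 ≤ dist p q := by
    have k1 : 1 ≤ dist a b := dab.ge
    have k2 : 1 ≤ dist a c := dac.ge
    have k3 : 1 ≤ dist b c := by rw [dbc]; linarith
    intro p hp q hq hpq
    simp only [hF, Finset.mem_insert, Finset.mem_singleton] at hp hq
    rcases hp with rfl | rfl | rfl <;> rcases hq with rfl | rfl | rfl <;>
      first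
        | exact absurd rfl hpq
        | assumption
        | (rw [dist_comm]; assumption)
  refine ⟨F, key_two_pairs F {a, b} {a, c} Δ hdF h1 ?_ ?_ hcardA hcardB hdA hdB ?_
    hsmall ⟨b, ?_, ?_⟩ ⟨c, ?_, ?_⟩ hmin⟩
  · intro v hv
    simp only [Finset.mem_insert, Finset.mem_singleton] at hv
    simp only [hF, Finset.mem_insert, Finset.mem_singleton]
    tauto
  · intro v hv
    simp only [Finset.mem_insert, Finset.mem_singleton] at hv
    simp only [hF, Finset.mem_insert, Finset.mem_singleton]
    tauto
  · intro z hz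
    simp only [hF, Finset.mem_insert, Finset.mem_singleton] at hz
    simp only [Finset.mem_insert, Finset.mem_singleton]
    tauto
  · simp
  · simp only [Finset.mem_insert, Finset.mem_singleton]
    push_neg
    exact ⟨Ne.symm hne_ab, hne_bc⟩
  · simp
  · simp only [Finset.mem_insert, Finset.mem_singleton]
    push_neg
    exact ⟨Ne.symm hne_ac, Ne.symm hne_bc⟩

set_option maxHeartbeats 1000000 in
open FinDim in
/-- The rectangle construction, for `2 < Δ`. -/
theorem FinDim.rect_case (Δ : ℝ) (h2 : 2 < Δ) :
    ∃ F : Finset (EuclideanSpace ℝ (Fin 2)), 2 ≤ F.card ∧ (∀ a, ¬ IsFocal F a) ∧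
      dimfH F = Real.log 2 / Real.log Δ ∧ dimfB F = Real.log 2 / Real.log Δ := by
  haveI := Classical.decEq (EuclideanSpace ℝ (Fin 2))
  have h1 : (1:ℝ) < Δ := by linarith
  have hΔ0 : (0:ℝ) < Δ := by linarith
  obtain ⟨h, hhdef⟩ : ∃ h : ℝ, h = Real.sqrt (Δ ^ 2 - 1) := ⟨_, rfl⟩
  have hq : 0 ≤ Δ ^ 2 - 1 := by nlinarith
  have hh2 : h ^ 2 = Δ ^ 2 - 1 := by rw [hhdef]; exact Real.sq_sqrt hq
  have hh0 : 0 ≤ h := by rw [hhdef]; exact Real.sqrt_nonneg _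
  have hh1 : 1 < h := by nlinarith
  have hhΔ : h < Δ := by nlinarith
  set a := pt 0 0 with ha
  set b := pt 1 0 with hb
  set c := pt 0 h with hc
  set d := pt 1 h with hd
  have dab : dist a b = 1 := by rw [ha, hb, dist_pt]; norm_num
  have dcd : dist c d = 1 := by rw [hc, hd, dist_pt]; norm_num
  have dac : dist a c = h := by
    rw [ha, hc, dist_pt]
    have e : (0 - 0 : ℝ) ^ 2 + (0 - h) ^ 2 = h ^ 2 := by ring
    rw [e, Real.sqrt_sq hh0]
  have dbd : dist b d = h := by
    rw [hb, hd, dist_pt]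
    have e : (1 - 1 : ℝ) ^ 2 + (0 - h) ^ 2 = h ^ 2 := by ring
    rw [e, Real.sqrt_sq hh0]
  have dad : dist a d = Δ := by
    rw [ha, hd, dist_pt]
    have e : (0 - 1 : ℝ) ^ 2 + (0 - h) ^ 2 = Δ ^ 2 := by linear_combination hh2
    rw [e, Real.sqrt_sq (le_of_lt hΔ0)]
  have dbc : dist b c = Δ := by
    rw [hb, hc, dist_pt]
    have e : (1 - 0 : ℝ) ^ 2 + (0 - h) ^ 2 = Δ ^ 2 := by linear_combination hh2
    rw [e, Real.sqrt_sq (le_of_lt hΔ0)]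
  have hne_ab : a ≠ b := dist_ne_zero.mp (by rw [dab]; norm_num)
  have hne_cd : c ≠ d := dist_ne_zero.mp (by rw [dcd]; norm_num)
  have hne_ac : a ≠ c := dist_ne_zero.mp (by rw [dac]; linarith)
  have hne_bd : b ≠ d := dist_ne_zero.mp (by rw [dbd]; linarith)
  have hne_ad : a ≠ d := dist_ne_zero.mp (by rw [dad]; linarith)
  have hne_bc : b ≠ c := dist_ne_zero.mp (by rw [dbc]; linarith)
  set F : Finset (EuclideanSpace ℝ (Fin 2)) := {a, b, c, d} with hF
  have hFset : (F : Set (EuclideanSpace ℝ (Fin 2))) = {a, b, c, d} := by simp [hF]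
  have hmemF : a ∈ F ∧ b ∈ F ∧ c ∈ F ∧ d ∈ F := by
    refine ⟨?_, ?_, ?_, ?_⟩ <;> simp [hF]
  have hdF : Metric.diam (F : Set (EuclideanSpace ℝ (Fin 2))) = Δ := by
    apply le_antisymm
    · apply Metric.diam_le_of_forall_dist_le (le_of_lt hΔ0)
      have lab : dist a b ≤ Δ := by rw [dab]; linarith
      have lcd : dist c d ≤ Δ := by rw [dcd]; linarith
      have lac : dist a c ≤ Δ := by rw [dac]; linarith
      have lbd : dist b d ≤ Δ := by rw [dbd]; linarith
      have lad : dist a d ≤ Δ := by rw [dad]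
      have lbc : dist b c ≤ Δ := by rw [dbc]
      intro p hp q hq
      rw [hFset] at hp hq
      simp only [Set.mem_insert_iff, Set.mem_singleton_iff] at hp hq
      rcases hp with rfl | rfl | rfl | rfl <;> rcases hq with rfl | rfl | rfl | rfl <;>
        first
          | (rw [dist_self]; linarith)
          | assumption
          | (rw [dist_comm]; assumption)
    · calc Δ = dist a d := dad.symm
        _ ≤ _ := Metric.dist_le_diam_of_mem F.finite_toSet.isBounded hmemF.1 hmemF.2.2.2
  have hdA : Metric.diam (({a, b} : Finset (EuclideanSpace ℝ (Fin 2))) :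
      Set (EuclideanSpace ℝ (Fin 2))) = 1 := by
    rw [Finset.coe_insert, Finset.coe_singleton, Metric.diam_pair, dab]
  have hdB : Metric.diam (({c, d} : Finset (EuclideanSpace ℝ (Fin 2))) :
      Set (EuclideanSpace ℝ (Fin 2))) = 1 := by
    rw [Finset.coe_insert, Finset.coe_singleton, Metric.diam_pair, dcd]
  have hcardA : ({a, b} : Finset (EuclideanSpace ℝ (Fin 2))).card = 2 :=
    Finset.card_pair hne_ab
  have hcardB : ({c, d} : Finset (EuclideanSpace ℝ (Fin 2))).card = 2 :=
    Finset.card_pair hne_cd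
  have hsmall : ∀ V : Finset (EuclideanSpace ℝ (Fin 2)), V ⊆ F → 2 ≤ V.card →
      Metric.diam (V : Set (EuclideanSpace ℝ (Fin 2))) ≤ 1 →
      V = ({a, b} : Finset _) ∨ V = ({c, d} : Finset _) := by
    intro V hVF hV2 hVd
    have hle : ∀ p ∈ V, ∀ q ∈ V, dist p q ≤ 1 := fun p hp q hq =>
      le_trans (Metric.dist_le_diam_of_mem V.finite_toSet.isBounded hp hq) hVd
    by_cases hcd : c ∈ V ∨ d ∈ V
    · right
      have haV : a ∉ V := by
        intro haV
        rcases hcd with hcV | hdV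
        · have := hle a haV c hcV; rw [dac] at this; linarith
        · have := hle a haV d hdV; rw [dad] at this; linarith
      have hbV : b ∉ V := by
        intro hbV
        rcases hcd with hcV | hdV
        · have := hle b hbV c hcV; rw [dbc] at this; linarith
        · have := hle b hbV d hdV; rw [dbd] at this; linarith
      have hsub : V ⊆ {c, d} := by
        intro v hv
        have := hVF hv
        simp only [hF, Finset.mem_insert, Finset.mem_singleton] at this ⊢
        rcases this with rfl | rfl | rfl | rfl
        · exact absurd hv haV
        · exact absurd hv hbV
        · exact Or.inl rfl
        · exact Or.inr rfl
      exact Finset.eq_of_subset_of_card_le hsub (by rw [hcardB]; exact hV2)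
    · left
      push_neg at hcd
      have hsub : V ⊆ {a, b} := by
        intro v hv
        have := hVF hv
        simp only [hF, Finset.mem_insert, Finset.mem_singleton] at this ⊢
        rcases this with rfl | rfl | rfl | rfl
        · exact Or.inl rfl
        · exact Or.inr rfl
        · exact absurd hv hcd.1
        · exact absurd hv hcd.2
      exact Finset.eq_of_subset_of_card_le hsub (by rw [hcardA]; exact hV2)
  have hmin : ∀ p ∈ F, ∀ q ∈ F, p ≠ q → 1 ≤ dist p q := by
    have k1 : 1 ≤ dist a b := dab.ge
    have k2 : 1 ≤ dist c d := dcd.ge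
    have k3 : 1 ≤ dist a c := by rw [dac]; linarith
    have k4 : 1 ≤ dist b d := by rw [dbd]; linarith
    have k5 : 1 ≤ dist a d := by rw [dad]; linarith
    have k6 : 1 ≤ dist b c := by rw [dbc]; linarith
    intro p hp q hq hpq
    simp only [hF, Finset.mem_insert, Finset.mem_singleton] at hp hq
    rcases hp with rfl | rfl | rfl | rfl <;> rcases hq with rfl | rfl | rfl | rfl <;>
      first
        | exact absurd rfl hpq
        | assumption
        | (rw [dist_comm]; assumption)
  refine ⟨F, key_two_pairs F {a, b} {c, d} Δ hdF h1 ?_ ?_ hcardA hcardB hdA hdB ?_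
    hsmall ⟨a, ?_, ?_⟩ ⟨c, ?_, ?_⟩ hmin⟩
  · intro v hv
    simp only [Finset.mem_insert, Finset.mem_singleton] at hv
    simp only [hF, Finset.mem_insert, Finset.mem_singleton]
    tauto
  · intro v hv
    simp only [Finset.mem_insert, Finset.mem_singleton] at hv
    simp only [hF, Finset.mem_insert, Finset.mem_singleton]
    tauto
  · intro z hz
    simp only [hF, Finset.mem_insert, Finset.mem_singleton] at hz
    simp only [Finset.mem_insert, Finset.mem_singleton]
    tauto
  · simp
  · simp only [Finset.mem_insert, Finset.mem_singleton]
    push_neg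
    exact ⟨hne_ac, hne_ad⟩
  · simp
  · simp only [Finset.mem_insert, Finset.mem_singleton]
    push_neg
    exact ⟨Ne.symm hne_ac, Ne.symm hne_bc⟩

open FinDim in
/-- Every `t ∈ (0,∞)` is the finite Hausdorff (and finite box) dimension of some
finite subset of the Euclidean plane. -/
theorem stmt11 (t : ℝ) (ht : 0 < t) :
    ∃ F : Finset (EuclideanSpace ℝ (Fin 2)), 2 ≤ F.card ∧ (∀ a, ¬ IsFocal F a) ∧
      dimfH F = t ∧ dimfB F = t := by
  have hlog2 : Real.log 2 ≠ 0 := ne_of_gt (Real.log_pos one_lt_two)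
  obtain ⟨Δ, hΔdef⟩ : ∃ Δ : ℝ, Δ = (2:ℝ) ^ (1/t) := ⟨_, rfl⟩
  have hΔ1 : 1 < Δ := by
    rw [hΔdef]
    exact (Real.one_lt_rpow_iff_of_pos two_pos).mpr (Or.inl ⟨one_lt_two, by positivity⟩)
  have hlog : Real.log 2 / Real.log Δ = t := by
    rw [hΔdef, Real.log_rpow two_pos]
    field_simp
  by_cases h2 : Δ ≤ 2
  · obtain ⟨F, hh⟩ := FinDim.tri_case Δ hΔ1 h2
    rw [hlog] at hh
    exact ⟨F, hh⟩
  · obtain ⟨F, hh⟩ := FinDim.rect_case Δ (lt_of_not_ge h2)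
    rw [hlog] at hh
    exact ⟨F, hh⟩
end
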